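/- Let p be an odd prime with p ≠ 3, let m ≥ 1 be an integer, and let k ∈ {1, 2} satisfy 2mp ≡ k (mod 3). Define F(X) = (∑_{i=0}^{mp+2k−1} X^i) − X^{2mp−k} · (∑_{i=0}^{k−1} X^i) · (X^{3k} + 1) ∈ ℤ[X]. Then M_{3p}(F) = p³·m. -/

import Mathlib

open Polynomial Finset

lemma pow_mod_eq {z : ℂ} {n : ℕ} (h : z ^ n = 1) (e : ℕ) : z ^ e = z ^ (e % n) := by
  conv_lhs => rw [← Nat.div_add_mod e n]
  rw [pow_add, pow_mul, h, one_pow, one_mul]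

lemma poly_prod {p : ℕ} (hp : 0 < p) {ξ : ℂ} (hξ : IsPrimitiveRoot ξ p) :
    ∏ b ∈ range p, (X - C (ξ ^ b)) = X ^ p - 1 := by
  have hroots : (nthRoots p (1 : ℂ)) = (Multiset.range p).map (ξ ^ ·) := by
    simpa using hξ.nthRoots_eq (one_pow p)
  have hmonic : (X ^ p - C (1 : ℂ)).Monic := monic_X_pow_sub_C _ hp.ne'
  have := prod_multiset_X_sub_C_of_monic_of_roots_card_eq hmonic ?_
  · rw [← nthRoots, hroots, C_1] at this
    rw [← this, Multiset.map_map]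
    rfl
  · rw [natDegree_X_pow_sub_C, ← nthRoots, hroots]
    simp

lemma poly_prod_erase {p : ℕ} (hp : 0 < p) {ξ : ℂ} (hξ : IsPrimitiveRoot ξ p) :
    ∏ b ∈ (range p).erase 0, (X - C (ξ ^ b)) = ∑ i ∈ range p, (X : ℂ[X]) ^ i := by
  have h0 : (0 : ℕ) ∈ range p := mem_range.mpr hp
  have hfac : (X - C (ξ ^ 0)) * ∏ b ∈ (range p).erase 0, (X - C (ξ ^ b))
      = X ^ p - 1 := by
    rw [Finset.mul_prod_erase (range p) (fun b => X - C (ξ ^ b)) h0, poly_prod hp hξ]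
  have hgeom : ((X : ℂ[X]) - 1) * ∑ i ∈ range p, (X : ℂ[X]) ^ i = X ^ p - 1 := by
    have := geom_sum_mul (X : ℂ[X]) p
    linear_combination this
  have hX1 : ((X : ℂ[X]) - 1) ≠ 0 := by
    intro h
    simpa using congrArg natDegree (sub_eq_zero.mp h)
  apply mul_left_cancel₀ hX1
  rw [hgeom, ← hfac]
  simp

lemma prod_eval {p : ℕ} (hp : 0 < p) {ξ : ℂ} (hξ : IsPrimitiveRoot ξ p) (r : ℂ) :
    ∏ b ∈ range p, (r - ξ ^ b) = r ^ p - 1 := by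
  have := congrArg (eval r) (poly_prod hp hξ)
  simpa only [eval_prod, eval_sub, eval_X, eval_C, eval_pow, eval_one] using this

lemma prod_eval_erase {p : ℕ} (hp : 0 < p) {ξ : ℂ} (hξ : IsPrimitiveRoot ξ p) (r : ℂ) :
    ∏ b ∈ (range p).erase 0, (r - ξ ^ b) = ∑ i ∈ range p, r ^ i := by
  have := congrArg (eval r) (poly_prod_erase hp hξ)
  simpa only [eval_prod, eval_sub, eval_X, eval_C, eval_pow, eval_one, eval_finset_sum]
    using this

lemma prod_reindex_aux {p c : ℕ} (hp : 0 < p) (hc : Nat.Coprime c p) :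
    Set.InjOn (fun b => c * b % p) (range p) := by
  intro b₁ h₁ b₂ h₂ h
  simp only [Finset.coe_range, Set.mem_Iio] at h₁ h₂
  have : b₁ ≡ b₂ [MOD p] :=
    Nat.ModEq.cancel_left_of_coprime (by rwa [Nat.gcd_comm]) h
  rwa [Nat.ModEq, Nat.mod_eq_of_lt h₁, Nat.mod_eq_of_lt h₂] at this

lemma surjon_of_img {α : Type*} [DecidableEq α] {s : Finset α} {e : α → α}
    (hmaps : ∀ b ∈ s, e b ∈ s) (hinj : Set.InjOn e s) : Set.SurjOn e s s := by
  have himg : s.image e = s := by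
    apply Finset.eq_of_subset_of_card_le
    · intro x hx
      obtain ⟨b, hb, rfl⟩ := Finset.mem_image.mp hx
      exact hmaps b hb
    · rw [Finset.card_image_of_injOn hinj]
  rw [Set.SurjOn, ← Finset.coe_image, himg]

lemma prod_reindex {p : ℕ} (hp : 0 < p) {ξ : ℂ} (hξ : ξ ^ p = 1) {c : ℕ}
    (hc : Nat.Coprime c p) (f : ℂ → ℂ) :
    ∏ b ∈ range p, f (ξ ^ (c * b)) = ∏ b ∈ range p, f (ξ ^ b) := by
  have hmaps : ∀ b ∈ range p, c * b % p ∈ range p :=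
    fun b _ => mem_range.mpr (Nat.mod_lt _ hp)
  exact Finset.prod_nbij (fun b => c * b % p) hmaps (prod_reindex_aux hp hc)
    (surjon_of_img hmaps (prod_reindex_aux hp hc)) (fun b _ => by rw [← pow_mod_eq hξ])

lemma prod_reindex_erase {p : ℕ} (hp : 0 < p) {ξ : ℂ} (hξ : ξ ^ p = 1) {c : ℕ}
    (hc : Nat.Coprime c p) (f : ℂ → ℂ) :
    ∏ b ∈ (range p).erase 0, f (ξ ^ (c * b)) = ∏ b ∈ (range p).erase 0, f (ξ ^ b) := by
  have hmaps : ∀ b ∈ (range p).erase 0, c * b % p ∈ (range p).erase 0 := by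
    intro b hb
    rw [Finset.mem_erase, mem_range] at hb ⊢
    refine ⟨?_, Nat.mod_lt _ hp⟩
    intro h0
    have hdvd : p ∣ c * b := Nat.dvd_of_mod_eq_zero h0
    have hpb : p ∣ b := (Nat.Coprime.dvd_of_dvd_mul_left (Nat.coprime_comm.mp hc) hdvd)
    exact hb.1 (Nat.eq_zero_of_dvd_of_lt hpb hb.2)
  have hinj : Set.InjOn (fun b => c * b % p) ((range p).erase 0) :=
    (prod_reindex_aux hp hc).mono (by
      intro x hx
      simp only [Finset.coe_erase, Set.mem_diff] at hx
      exact hx.1)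
  exact Finset.prod_nbij (fun b => c * b % p) hmaps hinj
    (surjon_of_img hmaps hinj) (fun b _ => by rw [← pow_mod_eq hξ])

lemma crt_inj {p : ℕ} (hp : 0 < p) (hp3 : p % 3 ≠ 0) :
    Set.InjOn (fun ab : ℕ × ℕ => (p * ab.1 + 3 * ab.2) % (3 * p))
      ((range 3) ×ˢ (range p)) := by
  rintro ⟨a₁, b₁⟩ h₁ ⟨a₂, b₂⟩ h₂ h
  simp only [Finset.coe_product, Set.mem_prod, Finset.coe_range, Set.mem_Iio] at h₁ h₂
  obtain ⟨ha₁, hb₁⟩ := h₁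
  obtain ⟨ha₂, hb₂⟩ := h₂
  simp only at h
  have hmod3 : (p * a₁ + 3 * b₁) % 3 = (p * a₂ + 3 * b₂) % 3 := by
    have e1 := Nat.mod_mod_of_dvd (p * a₁ + 3 * b₁) (⟨p, rfl⟩ : (3:ℕ) ∣ 3 * p)
    have e2 := Nat.mod_mod_of_dvd (p * a₂ + 3 * b₂) (⟨p, rfl⟩ : (3:ℕ) ∣ 3 * p)
    rw [← e1, ← e2, h]
  have ha : a₁ = a₂ := by
    interval_cases a₁ <;> interval_cases a₂ <;> omega
  subst ha
  have h' : p * a₁ + 3 * b₁ ≡ p * a₁ + 3 * b₂ [MOD 3 * p] := h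
  have h'' : 3 * b₁ ≡ 3 * b₂ [MOD 3 * p] := Nat.ModEq.add_left_cancel' _ h'
  have h3 : b₁ ≡ b₂ [MOD p] := Nat.ModEq.mul_left_cancel' (by norm_num) h''
  have := h3
  rw [Nat.ModEq, Nat.mod_eq_of_lt hb₁, Nat.mod_eq_of_lt hb₂] at this
  exact Prod.ext rfl this

lemma crt_surj {p : ℕ} (hp : 0 < p) (hp3 : p % 3 ≠ 0) :
    Set.SurjOn (fun ab : ℕ × ℕ => (p * ab.1 + 3 * ab.2) % (3 * p))
      ((range 3) ×ˢ (range p)) (range (3 * p)) := by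
  intro j hj
  simp only [Finset.coe_range, Set.mem_Iio] at hj
  set a := (j * p) % 3 with ha_def
  have ha3 : a < 3 := Nat.mod_lt _ (by norm_num)
  have hkey : (p * a) % 3 = j % 3 := by
    have e : a = (j % 3) * (p % 3) % 3 := by rw [ha_def, Nat.mul_mod]
    have e2 : (p * a) % 3 = ((p % 3) * a) % 3 := by
      conv_lhs => rw [Nat.mul_mod]
      rw [Nat.mod_eq_of_lt ha3]
    rw [e2, e]
    rcases (show p % 3 = 1 ∨ p % 3 = 2 by omega) with h | h <;> rw [h] <;> omega
  have hpa3 : p * a ≤ 2 * p := by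
    calc p * a ≤ p * 2 := Nat.mul_le_mul_left _ (by omega)
    _ = 2 * p := by ring
  obtain ⟨s, hs⟩ : (3:ℕ) ∣ (j + 3 * p - p * a) := by omega
  have hbp : s % p < p := Nat.mod_lt _ hp
  refine ⟨(a, s % p), ?_, ?_⟩
  · simp only [Finset.coe_product, Set.mem_prod, Finset.coe_range, Set.mem_Iio]
    exact ⟨ha3, hbp⟩
  · simp only
    obtain ⟨q, b, hsplit, hbp', hq⟩ : ∃ q b, s = p * q + b ∧ b < p ∧ b = s % p :=
      ⟨s / p, s % p, (Nat.div_add_mod s p).symm, hbp, rfl⟩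
    rw [← hq]
    have heq : p * a + 3 * b + 3 * (p * q) = j + 3 * p := by omega
    have hq01 : q = 0 ∨ q = 1 := by
      by_contra hcon
      have hq2 : 2 ≤ q := by omega
      have : p * 2 ≤ p * q := Nat.mul_le_mul_left _ hq2
      omega
    rcases hq01 with h | h
    · subst h
      simp only [mul_zero, add_zero] at heq
      rw [heq, Nat.add_mod_right, Nat.mod_eq_of_lt hj]
    · subst h
      have heq2 : p * a + 3 * b = j := by omega
      rw [heq2, Nat.mod_eq_of_lt hj]

lemma crt_prod {p : ℕ} (hp : 0 < p) (hp3 : p % 3 ≠ 0) {ζ : ℂ} (hζ : ζ ^ (3 * p) = 1)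
    (f : ℂ → ℂ) :
    ∏ j ∈ range (3 * p), f (ζ ^ j) =
      ∏ a ∈ range 3, ∏ b ∈ range p, f ((ζ ^ p) ^ a * (ζ ^ 3) ^ b) := by
  rw [← Finset.prod_product']
  symm
  refine Finset.prod_nbij (fun ab : ℕ × ℕ => (p * ab.1 + 3 * ab.2) % (3 * p))
    (fun ab _ => mem_range.mpr (Nat.mod_lt _ (by positivity)))
    (by rw [Finset.coe_product]; exact crt_inj hp hp3)
    (by rw [Finset.coe_product]; exact crt_surj hp hp3) ?_
  rintro ⟨a, b⟩ _
  simp only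
  rw [← pow_mod_eq hζ, pow_add, pow_mul, pow_mul]

noncomputable def Fpoly (m p k : ℕ) : Polynomial ℤ :=
  (∑ i ∈ Finset.range (m * p + 2 * k), (X : Polynomial ℤ) ^ i)
    - X ^ (2 * m * p - k) * (∑ i ∈ Finset.range k, (X : Polynomial ℤ) ^ i)
      * (X ^ (3 * k) + 1)

lemma eval_F (m p k : ℕ) (z c u : ℂ)
    (h1 : z ^ (m * p + 2 * k) = c * u ^ 2) (h2 : z ^ k = c * u)
    (h3 : z ^ (3 * k) = u ^ 3) (h4 : z ^ (2 * m * p - k) * u = 1) :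
    (Polynomial.aeval z (Fpoly m p k)) * ((z - 1) * u)
      = (c * u ^ 2 - 1) * u - (c * u - 1) * (u ^ 3 + 1) := by
  have f1 : (∑ i ∈ range (m * p + 2 * k), z ^ i) * (z - 1) = z ^ (m * p + 2 * k) - 1 :=
    geom_sum_mul z _
  have f2 : (∑ i ∈ range k, z ^ i) * (z - 1) = z ^ k - 1 := geom_sum_mul z _
  simp only [Fpoly, map_sub, map_mul, map_add, map_pow, map_sum, map_one, aeval_X]
  linear_combination u * f1 + u * h1
    - u * z ^ (2 * m * p - k) * (z ^ (3 * k) + 1) * f2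
    - u * z ^ (2 * m * p - k) * (z ^ (3 * k) + 1) * h2
    - u * z ^ (2 * m * p - k) * (c * u - 1) * h3
    - (c * u - 1) * (u ^ 3 + 1) * h4

lemma pow_cong {z : ℂ} {n x y : ℕ} (hz : z ^ n = 1) (h : x ≡ y [MOD n]) : z ^ x = z ^ y := by
  have h' : x % n = y % n := h
  rw [pow_mod_eq hz x, pow_mod_eq hz y, h']

lemma z_facts {p m k : ℕ} {ω ξ : ℂ}
    (hq1 : (m * p + 2 * k) % 3 = k % 3) (hq2 : (2 * m * p) % 3 = k % 3)
    (hk2mp : k ≤ 2 * m * p)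
    (hω3 : ω ^ 3 = 1) (hξp : ξ ^ p = 1) (a b : ℕ) :
    ((ω ^ a * ξ ^ b) ^ (m * p + 2 * k) = ω ^ (a * k) * (ξ ^ (k * b)) ^ 2) ∧
    ((ω ^ a * ξ ^ b) ^ k = ω ^ (a * k) * ξ ^ (k * b)) ∧
    ((ω ^ a * ξ ^ b) ^ (3 * k) = (ξ ^ (k * b)) ^ 3) ∧
    ((ω ^ a * ξ ^ b) ^ (2 * m * p - k) * ξ ^ (k * b) = 1) := by
  have hω0 : ω ≠ 0 := by
    intro h; rw [h] at hω3; simp at hω3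
  have expand : ∀ e : ℕ, (ω ^ a * ξ ^ b) ^ e = ω ^ (a * e) * ξ ^ (b * e) := by
    intro e; rw [mul_pow, ← pow_mul, ← pow_mul]
  have hωmod : ∀ x y : ℕ, x % 3 = y % 3 → ω ^ x = ω ^ y := fun x y h => pow_cong hω3 h
  have hξmod : ∀ x y : ℕ, x ≡ y [MOD p] → ξ ^ x = ξ ^ y := fun x y h => pow_cong hξp h
  have hmp0 : m * p ≡ 0 [MOD p] := (Nat.modEq_zero_iff_dvd).mpr ⟨m, by ring⟩
  have h1 : (ω ^ a * ξ ^ b) ^ (m * p + 2 * k) = ω ^ (a * k) * (ξ ^ (k * b)) ^ 2 := by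
    rw [expand]
    congr 1
    · exact hωmod _ _ (Nat.ModEq.mul_left a hq1)
    · rw [← pow_mul]
      apply hξmod
      calc b * (m * p + 2 * k) ≡ b * (0 + 2 * k) [MOD p] :=
            Nat.ModEq.mul_left b (hmp0.add_right (2 * k))
        _ = k * b * 2 := by ring
  have h2 : (ω ^ a * ξ ^ b) ^ k = ω ^ (a * k) * ξ ^ (k * b) := by
    rw [expand]
    congr 1
    rw [mul_comm b k]
  have h3 : (ω ^ a * ξ ^ b) ^ (3 * k) = (ξ ^ (k * b)) ^ 3 := by
    rw [expand, ← pow_mul]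
    have : ω ^ (a * (3 * k)) = 1 := by
      rw [show a * (3 * k) = 3 * (a * k) by ring, pow_mul, hω3, one_pow]
    rw [this, one_mul]
    apply hξmod
    exact (by ring_nf : b * (3 * k) = k * b * 3) ▸ Nat.ModEq.rfl
  have h4 : (ω ^ a * ξ ^ b) ^ (2 * m * p - k) * ξ ^ (k * b) = 1 := by
    have hzk : (ω ^ a * ξ ^ b) ^ (2 * m * p - k) * ((ω ^ a * ξ ^ b) ^ k)
        = (ω ^ a * ξ ^ b) ^ (2 * m * p) := by
      rw [← pow_add, Nat.sub_add_cancel hk2mp]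
    have hz2mp : (ω ^ a * ξ ^ b) ^ (2 * m * p) = ω ^ (a * k) := by
      rw [expand]
      have e1 : ω ^ (a * (2 * m * p)) = ω ^ (a * k) :=
        hωmod _ _ (Nat.ModEq.mul_left a hq2)
      have e2 : ξ ^ (b * (2 * m * p)) = 1 := by
        rw [show b * (2 * m * p) = p * (b * (2 * m)) by ring, pow_mul, hξp, one_pow]
      rw [e1, e2, mul_one]
    have hc0 : (ω : ℂ) ^ (a * k) ≠ 0 := pow_ne_zero _ hω0
    apply mul_left_cancel₀ hc0
    rw [mul_one]
    calc ω ^ (a * k) * ((ω ^ a * ξ ^ b) ^ (2 * m * p - k) * ξ ^ (k * b))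
        = (ω ^ a * ξ ^ b) ^ (2 * m * p - k) * (ω ^ (a * k) * ξ ^ (k * b)) := by ring
      _ = (ω ^ a * ξ ^ b) ^ (2 * m * p - k) * ((ω ^ a * ξ ^ b) ^ k) := by rw [← h2]
      _ = ω ^ (a * k) := by rw [hzk, hz2mp]
  exact ⟨h1, h2, h3, h4⟩

lemma sum_neg_one {p : ℕ} (hpodd : Odd p) : ∑ i ∈ range p, (-1 : ℂ) ^ i = 1 := by
  have h := geom_sum_mul (-1 : ℂ) p
  rw [hpodd.neg_one_pow] at h
  have h2 : (∑ i ∈ range p, (-1 : ℂ) ^ i) * (-2) = -2 := by linear_combination h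
  linear_combination (-1/2 : ℂ) * h2

lemma prod_xi_sub {p : ℕ} (hp : 0 < p) (hpodd : Odd p) {ξ : ℂ} (hξ : IsPrimitiveRoot ξ p)
    (r : ℂ) : ∏ b ∈ range p, (ξ ^ b - r) = 1 - r ^ p := by
  calc ∏ b ∈ range p, (ξ ^ b - r) = ∏ b ∈ range p, (-1) * (r - ξ ^ b) := by
        apply Finset.prod_congr rfl; intros; ring
    _ = (-1) ^ p * ∏ b ∈ range p, (r - ξ ^ b) := by
        rw [Finset.prod_mul_distrib, Finset.prod_const, Finset.card_range]
    _ = 1 - r ^ p := by rw [prod_eval hp hξ r, hpodd.neg_one_pow]; ring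

lemma card_erase_range {p : ℕ} (hp : 0 < p) : ((range p).erase 0).card = p - 1 := by
  rw [Finset.card_erase_of_mem (mem_range.mpr hp), Finset.card_range]

lemma neg_one_pow_pred {p : ℕ} (hpodd : Odd p) : (-1 : ℂ) ^ (p - 1) = 1 :=
  Even.neg_one_pow (Nat.Odd.sub_odd hpodd odd_one)

lemma prod_erase_gen {p : ℕ} (hp : 0 < p) (hpodd : Odd p) {ξ : ℂ}
    (hξ : IsPrimitiveRoot ξ p) (r : ℂ) :
    ∏ b ∈ (range p).erase 0, (ξ ^ b - r) = ∑ i ∈ range p, r ^ i := by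
  calc ∏ b ∈ (range p).erase 0, (ξ ^ b - r)
      = ∏ b ∈ (range p).erase 0, (-1) * (r - ξ ^ b) := by
        apply Finset.prod_congr rfl; intros; ring
    _ = (-1) ^ (p - 1) * ∏ b ∈ (range p).erase 0, (r - ξ ^ b) := by
        rw [Finset.prod_mul_distrib, Finset.prod_const, card_erase_range hp]
    _ = ∑ i ∈ range p, r ^ i := by
        rw [prod_eval_erase hp hξ r, neg_one_pow_pred hpodd, one_mul]

lemma prod_erase_sub_one {p : ℕ} (hp : 0 < p) (hpodd : Odd p) {ξ : ℂ}
    (hξ : IsPrimitiveRoot ξ p) :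
    ∏ b ∈ (range p).erase 0, (ξ ^ b - 1) = (p : ℂ) := by
  rw [prod_erase_gen hp hpodd hξ 1]
  simp

lemma prod_erase_add_one {p : ℕ} (hp : 0 < p) (hpodd : Odd p) {ξ : ℂ}
    (hξ : IsPrimitiveRoot ξ p) :
    ∏ b ∈ (range p).erase 0, (ξ ^ b + 1) = 1 := by
  have h := prod_erase_gen hp hpodd hξ (-1)
  rw [sum_neg_one hpodd] at h
  rw [show (∏ b ∈ (range p).erase 0, (ξ ^ b + 1))
    = ∏ b ∈ (range p).erase 0, (ξ ^ b - (-1)) from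
      Finset.prod_congr rfl (fun b _ => by ring), h]

lemma prod_pow_sum {p k : ℕ} (hpodd : Odd p) {ξ : ℂ} (hξp : ξ ^ p = 1) :
    ∏ b ∈ range p, ξ ^ (k * b) = 1 := by
  rw [Finset.prod_pow_eq_pow_sum]
  obtain ⟨t, ht⟩ : ∃ t, p - 1 = 2 * t := (Nat.Odd.sub_odd hpodd odd_one).exists_two_nsmul _
  have hsum : ∑ b ∈ range p, b = p * t := by
    have h2 := Finset.sum_range_id_mul_two p
    have h3 : p * (p - 1) = 2 * (p * t) := by rw [ht]; ring
    omega
  rw [← Finset.mul_sum, hsum, show k * (p * t) = p * (k * t) by ring, pow_mul, hξp, one_pow]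

lemma prod_erase_pow {p k : ℕ} (hp : 0 < p) (hpodd : Odd p) {ξ : ℂ} (hξp : ξ ^ p = 1) :
    ∏ b ∈ (range p).erase 0, ξ ^ (k * b) = 1 := by
  have h := Finset.mul_prod_erase (range p) (fun b => ξ ^ (k * b)) (mem_range.mpr hp)
  rw [prod_pow_sum hpodd hξp] at h
  simpa using h

lemma P0_val {p m k : ℕ} {ξ : ℂ} (hp : 0 < p) (hpodd : Odd p)
    (hq1 : (m * p + 2 * k) % 3 = k % 3) (hq2 : (2 * m * p) % 3 = k % 3)
    (hk2mp : k ≤ 2 * m * p) (hck : Nat.Coprime k p)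
    (hξ : IsPrimitiveRoot ξ p) :
    ∏ b ∈ range p, (Polynomial.aeval (ξ ^ b) (Fpoly m p k))
      = ((m * p : ℕ) : ℂ) * (p : ℂ) ^ 2 := by
  have hξp : ξ ^ p = 1 := hξ.pow_eq_one
  have hξ0 : ξ ≠ 0 := hξ.ne_zero hp.ne'
  have hp0 : ((p : ℂ)) ≠ 0 := Nat.cast_ne_zero.mpr hp.ne'
  rw [← Finset.mul_prod_erase (range p) _ (mem_range.mpr hp)]
  -- value at b = 0
  have hF1 : Polynomial.aeval ((ξ : ℂ) ^ 0) (Fpoly m p k) = ((m * p : ℕ) : ℂ) := by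
    simp only [pow_zero, Fpoly, map_sub, map_mul, map_add, map_pow, map_sum, map_one,
      aeval_X, one_pow, Finset.sum_const, Finset.card_range, nsmul_eq_mul, mul_one]
    push_cast
    ring
  rw [hF1]
  -- values at b ≠ 0
  have hvals : ∀ b ∈ (range p).erase 0,
      Polynomial.aeval ((ξ : ℂ) ^ b) (Fpoly m p k)
        = (-1) * (ξ ^ (k * b) + 1) * (ξ ^ (k * b) - 1) ^ 3 / ((ξ ^ b - 1) * ξ ^ (k * b)) := by
    intro b hb
    rw [Finset.mem_erase, mem_range] at hb
    obtain ⟨h1, h2, h3, h4⟩ := z_facts (ω := 1) hq1 hq2 hk2mp (one_pow 3) hξp 0 b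
    simp only [pow_zero, one_mul, zero_mul] at h1 h2 h3 h4
    have key := eval_F m p k (ξ ^ b) 1 (ξ ^ (k * b)) (by simpa using h1)
      (by simpa using h2) h3 h4
    have hne : ((ξ : ℂ) ^ b - 1) * ξ ^ (k * b) ≠ 0 :=
      mul_ne_zero (sub_ne_zero.mpr (hξ.pow_ne_one_of_pos_of_lt hb.1 hb.2))
        (pow_ne_zero _ hξ0)
    rw [eq_div_iff hne, key]
    ring
  rw [Finset.prod_congr rfl hvals, Finset.prod_div_distrib]
  have hnum : ∏ b ∈ (range p).erase 0,
      ((-1) * (ξ ^ (k * b) + 1) * (ξ ^ (k * b) - 1) ^ 3) = (p : ℂ) ^ 3 := by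
    rw [show (fun b => (-1 : ℂ) * (ξ ^ (k * b) + 1) * (ξ ^ (k * b) - 1) ^ 3)
      = fun b => ((-1 : ℂ) * (ξ ^ (k * b) + 1)) * ((ξ ^ (k * b) - 1) ^ 3) from rfl]
    rw [Finset.prod_mul_distrib, Finset.prod_mul_distrib, Finset.prod_const,
      card_erase_range hp, neg_one_pow_pred hpodd, one_mul]
    have e1 : ∏ b ∈ (range p).erase 0, (ξ ^ (k * b) + 1) = 1 := by
      rw [prod_reindex_erase hp hξp hck (fun x => x + 1)]
      exact prod_erase_add_one hp hpodd hξ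
    have e2 : ∏ b ∈ (range p).erase 0, (ξ ^ (k * b) - 1) ^ 3
        = ((p : ℂ)) ^ 3 := by
      rw [Finset.prod_pow, prod_reindex_erase hp hξp hck (fun x => x - 1),
        prod_erase_sub_one hp hpodd hξ]
    rw [e1, e2, one_mul]
  have hden : ∏ b ∈ (range p).erase 0, ((ξ ^ b - 1) * ξ ^ (k * b)) = (p : ℂ) := by
    rw [Finset.prod_mul_distrib, prod_erase_sub_one hp hpodd hξ,
      prod_erase_pow hp hpodd hξp, mul_one]
  rw [hnum, hden]
  field_simp

lemma Pa_val {p m k : ℕ} {ω ξ : ℂ} (hp : 0 < p) (hpodd : Odd p)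
    (hq1 : (m * p + 2 * k) % 3 = k % 3) (hq2 : (2 * m * p) % 3 = k % 3)
    (hk2mp : k ≤ 2 * m * p) (hck : Nat.Coprime k p) (hc3 : Nat.Coprime 3 p)
    (hξ : IsPrimitiveRoot ξ p) (hω : IsPrimitiveRoot ω 3)
    (a : ℕ) (ha : a = 1 ∨ a = 2) (hk12 : k = 1 ∨ k = 2) :
    ∏ b ∈ range p, (Polynomial.aeval (ω ^ a * ξ ^ b) (Fpoly m p k))
      = if k = 1 then -1 else (ω ^ (a * p)) ^ 2 := by
  have hξp : ξ ^ p = 1 := hξ.pow_eq_one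
  have hω3 : ω ^ 3 = 1 := hω.pow_eq_one
  have hξ0 : ξ ≠ 0 := hξ.ne_zero hp.ne'
  have hω0 : ω ≠ 0 := hω.ne_zero (by norm_num)
  set c : ℂ := ω ^ (a * k) with hc_def
  set w : ℂ := ω ^ (a * p) with hw_def
  have hc1 : c ≠ 1 := by
    intro h
    have hdvd := (hω.pow_eq_one_iff_dvd _).mp h
    rcases ha with rfl | rfl <;> rcases hk12 with rfl | rfl <;> omega
  have hw1 : w ≠ 1 := by
    intro h
    have hdvd := (hω.pow_eq_one_iff_dvd _).mp h
    have h3p : (3 : ℕ) ∣ p := by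
      rcases ha with rfl | rfl
      · simpa using hdvd
      · exact Nat.Coprime.dvd_of_dvd_mul_left (by norm_num) hdvd
    have h31 : (3 : ℕ) = 1 := by rw [← Nat.gcd_eq_left h3p]; exact hc3
    norm_num at h31
  have hc0 : c ≠ 0 := pow_ne_zero _ hω0
  have hw0 : w ≠ 0 := pow_ne_zero _ hω0
  have hw3 : w ^ 3 = 1 := by
    rw [hw_def, ← pow_mul, show a * p * 3 = 3 * (a * p) by ring, pow_mul, hω3, one_pow]
  have hc3eq : c ^ 3 = 1 := by
    rw [hc_def, ← pow_mul, show a * k * 3 = 3 * (a * k) by ring, pow_mul, hω3, one_pow]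
  have hcs : c ^ 2 + c + 1 = 0 := by
    have hfac : (c - 1) * (c ^ 2 + c + 1) = 0 := by linear_combination hc3eq
    rcases mul_eq_zero.mp hfac with h | h
    · exact absurd (sub_eq_zero.mp h) hc1
    · exact h
  have hcw : c ^ p = w ^ k := by
    rw [hc_def, hw_def, ← pow_mul, ← pow_mul, show a * k * p = a * p * k by ring]
  have hw2ne : 1 - w ^ 2 ≠ 0 := by
    intro h
    have h2 : w ^ 2 = 1 := by linear_combination -h
    apply hw1
    calc w = w * w ^ 2 := by rw [h2, mul_one]
      _ = w ^ 3 := by ring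
      _ = 1 := hw3
  -- z ≠ 1 for all b
  have hz1 : ∀ b : ℕ, ω ^ a * ξ ^ b ≠ 1 := by
    intro b h
    apply hw1
    have := congrArg (· ^ p) h
    simp only [mul_pow, one_pow, ← pow_mul] at this
    rw [show b * p = p * b by ring] at this
    rw [pow_mul ξ p b, hξp, one_pow, mul_one] at this
    exact this
  -- pointwise values
  have hvals : ∀ b ∈ range p,
      Polynomial.aeval (ω ^ a * ξ ^ b) (Fpoly m p k)
        = (-c) * (ξ ^ (k * b) + c) * ((ξ ^ (k * b)) ^ 3 - c)
            / ((ω ^ a * ξ ^ b - 1) * ξ ^ (k * b)) := by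
    intro b _
    obtain ⟨h1, h2, h3, h4⟩ := z_facts hq1 hq2 hk2mp hω3 hξp a b
    have key := eval_F m p k (ω ^ a * ξ ^ b) c (ξ ^ (k * b)) h1 h2 h3 h4
    have hne : (ω ^ a * ξ ^ b - 1) * ξ ^ (k * b) ≠ 0 :=
      mul_ne_zero (sub_ne_zero.mpr (hz1 b)) (pow_ne_zero _ hξ0)
    rw [eq_div_iff hne, key]
    linear_combination ((ξ ^ (k * b)) ^ 3 - ξ ^ (k * b) - c + 1) * hcs
  rw [Finset.prod_congr rfl hvals, Finset.prod_div_distrib]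
  have hnum : ∏ b ∈ range p, ((-c) * (ξ ^ (k * b) + c) * ((ξ ^ (k * b)) ^ 3 - c))
      = (- c ^ p) * (1 + c ^ p) * (1 - c ^ p) := by
    rw [show (fun b => (-c) * (ξ ^ (k * b) + c) * ((ξ ^ (k * b)) ^ 3 - c))
      = fun b => ((-c) * (ξ ^ (k * b) + c)) * ((ξ ^ (k * b)) ^ 3 - c) from rfl]
    rw [Finset.prod_mul_distrib, Finset.prod_mul_distrib, Finset.prod_const,
      Finset.card_range]
    have e0 : (-c) ^ p = - c ^ p := hpodd.neg_pow c
    have e1 : ∏ b ∈ range p, (ξ ^ (k * b) + c) = 1 + c ^ p := by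
      rw [prod_reindex hp hξp hck (fun x => x + c)]
      have h' := prod_xi_sub hp hpodd hξ (-c)
      rw [hpodd.neg_pow c, sub_neg_eq_add] at h'
      rw [← h']
      apply Finset.prod_congr rfl; intros; ring
    have e2 : ∏ b ∈ range p, ((ξ ^ (k * b)) ^ 3 - c) = 1 - c ^ p := by
      rw [prod_reindex hp hξp hck (fun x => x ^ 3 - c)]
      have step : ∀ b ∈ range p, ((ξ ^ b) ^ 3 - c) = (ξ ^ (3 * b) - c) := by
        intro b _
        rw [show 3 * b = b * 3 by ring, pow_mul]
      rw [Finset.prod_congr rfl step, prod_reindex hp hξp hc3 (fun x => x - c)]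
      exact prod_xi_sub hp hpodd hξ c
    rw [e0, e1, e2]
  have hden : ∏ b ∈ range p, ((ω ^ a * ξ ^ b - 1) * ξ ^ (k * b)) = w * (1 - w ^ 2) := by
    rw [Finset.prod_mul_distrib, prod_pow_sum hpodd hξp, mul_one]
    have step : ∀ b ∈ range p, (ω ^ a * ξ ^ b - 1) = ω ^ a * (ξ ^ b - ω ^ (2 * a)) := by
      intro b _
      have h3a : ω ^ (3 * a) = 1 := by rw [pow_mul, hω3, one_pow]
      have : ω ^ a * ω ^ (2 * a) = 1 := by rw [← pow_add, show a + 2 * a = 3 * a by ring, h3a]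
      linear_combination this
    rw [Finset.prod_congr rfl step, Finset.prod_mul_distrib, Finset.prod_const,
      Finset.card_range, prod_xi_sub hp hpodd hξ (ω ^ (2 * a)), ← pow_mul, ← pow_mul,
      show 2 * a * p = a * p * 2 by ring, pow_mul ω (a * p) 2, ← hw_def]
  rw [hnum, hden, hcw]
  have hdenne : w * (1 - w ^ 2) ≠ 0 := mul_ne_zero hw0 hw2ne
  rcases hk12 with rfl | rfl
  · rw [if_pos rfl, div_eq_iff hdenne]
    ring
  · rw [if_neg (by norm_num : ¬ (2 : ℕ) = 1), div_eq_iff hdenne]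
    linear_combination (w ^ 3 + w ^ 2) * hw3

/-- `Mnorm n F` is the product of `F` over all `n`-th roots of unity in `ℂ`. -/
noncomputable def Mnorm (n : ℕ) (F : Polynomial ℤ) : ℂ :=
  ∏ j ∈ Finset.range n,
    Polynomial.aeval (Complex.exp (2 * ↑Real.pi * Complex.I * (j : ℂ) / (n : ℂ))) F

theorem stmt5 (p : ℕ) (hp : Nat.Prime p) (hpodd : Odd p) (hp3 : p ≠ 3)
    (m : ℕ) (hm : 1 ≤ m) (k : ℕ) (hk : k = 1 ∨ k = 2) (hmod : (2 * m * p) % 3 = k) :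
    Mnorm (3 * p)
      ((∑ i ∈ Finset.range (m * p + 2 * k), (X : Polynomial ℤ) ^ i)
        - X ^ (2 * m * p - k) * (∑ i ∈ Finset.range k, (X : Polynomial ℤ) ^ i)
          * (X ^ (3 * k) + 1))
      = (p : ℂ) ^ 3 * (m : ℂ) := by
  have hp1 : 0 < p := hp.pos
  have hmp1 : 1 ≤ m * p := Nat.one_le_iff_ne_zero.mpr (by positivity)
  have e2mp : 2 * m * p = 2 * (m * p) := by ring
  have hq1 : (m * p + 2 * k) % 3 = k % 3 := by omega
  have hq2 : (2 * m * p) % 3 = k % 3 := by omega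
  have hk2mp : k ≤ 2 * m * p := by omega
  have hck : Nat.Coprime k p := by
    rcases hk with rfl | rfl
    · exact Nat.coprime_one_left p
    · exact Nat.coprime_two_left.mpr hpodd
  have hc3 : Nat.Coprime 3 p :=
    (Nat.coprime_primes (by norm_num) hp).mpr (fun h => hp3 h.symm)
  have hp3' : p % 3 ≠ 0 := by
    intro h0
    have h3p : (3 : ℕ) ∣ p := Nat.dvd_of_mod_eq_zero h0
    have h31 : (3 : ℕ) = 1 := by rw [← Nat.gcd_eq_left h3p]; exact hc3
    norm_num at h31
  have hn0 : (3 * p) ≠ 0 := by positivity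
  set ζ : ℂ := Complex.exp (2 * ↑Real.pi * Complex.I / ((3 * p : ℕ) : ℂ)) with hζ_def
  have hζprim : IsPrimitiveRoot ζ (3 * p) := Complex.isPrimitiveRoot_exp (3 * p) hn0
  have hζpow : ζ ^ (3 * p) = 1 := hζprim.pow_eq_one
  have hωprim : IsPrimitiveRoot (ζ ^ p) 3 :=
    hζprim.pow (by positivity) (by ring)
  have hξprim : IsPrimitiveRoot (ζ ^ 3) p :=
    hζprim.pow (by positivity) rfl
  have hω3 : (ζ ^ p) ^ 3 = 1 := hωprim.pow_eq_one
  have hξp : (ζ ^ 3) ^ p = 1 := hξprim.pow_eq_one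
  rw [Mnorm]
  have hexp : ∀ j ∈ range (3 * p),
      Polynomial.aeval (Complex.exp (2 * ↑Real.pi * Complex.I * (j : ℂ) / ((3 * p : ℕ) : ℂ)))
        (Fpoly m p k)
      = Polynomial.aeval (ζ ^ j) (Fpoly m p k) := by
    intro j _
    congr 1
    rw [hζ_def, ← Complex.exp_nat_mul]
    congr 1
    push_cast
    ring
  rw [show ((∑ i ∈ Finset.range (m * p + 2 * k), (X : Polynomial ℤ) ^ i)
        - X ^ (2 * m * p - k) * (∑ i ∈ Finset.range k, (X : Polynomial ℤ) ^ i)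
          * (X ^ (3 * k) + 1)) = Fpoly m p k from rfl]
  rw [Finset.prod_congr rfl hexp]
  rw [crt_prod hp1 hp3' hζpow (fun z => Polynomial.aeval z (Fpoly m p k))]
  rw [Finset.prod_range_succ, Finset.prod_range_succ, Finset.prod_range_one]
  have h0 : ∏ b ∈ range p, Polynomial.aeval ((ζ ^ p) ^ 0 * (ζ ^ 3) ^ b) (Fpoly m p k)
      = ((m * p : ℕ) : ℂ) * (p : ℂ) ^ 2 := by
    rw [show (fun b => Polynomial.aeval ((ζ ^ p) ^ 0 * (ζ ^ 3) ^ b) (Fpoly m p k))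
      = fun b => Polynomial.aeval ((ζ ^ 3) ^ b) (Fpoly m p k) from by
        funext b; rw [pow_zero, one_mul]]
    exact P0_val hp1 hpodd hq1 hq2 hk2mp hck hξprim
  have h1 := Pa_val hp1 hpodd hq1 hq2 hk2mp hck hc3 hξprim hωprim 1 (Or.inl rfl) hk
  have h2 := Pa_val hp1 hpodd hq1 hq2 hk2mp hck hc3 hξprim hωprim 2 (Or.inr rfl) hk
  rw [h0, h1, h2]
  rcases hk with rfl | rfl
  · rw [if_pos rfl, if_pos rfl]
    push_cast
    ring
  · rw [if_neg (by norm_num), if_neg (by norm_num)]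
    have hcomb : ((ζ ^ p) ^ (1 * p)) ^ 2 * ((ζ ^ p) ^ (2 * p)) ^ 2 = 1 := by
      rw [← pow_mul (ζ ^ p) (1 * p) 2, ← pow_mul (ζ ^ p) (2 * p) 2, ← pow_add,
        show 1 * p * 2 + 2 * p * 2 = 3 * (2 * p) by ring, pow_mul, hω3, one_pow]
    rw [mul_assoc, hcomb, mul_one]
    push_cast
    ring
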